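/- arXiv:2012.03340 — 2 statements merged into one kernel-verified Lean document; each statement's English description precedes it below -/
import Mathlib

section
/- Let F ∈ L₁ be non-decreasing with a constant section K (a closed non-degenerate interval on which F is constant). Suppose n ∈ ℕ is minimal such that Fⁿ(K) ∩ (K + ℤ) ≠ ∅. Then there exists ξ ∈ ℝ with Fⁿ(K) = {ξ}, ξ ∈ K + m where m = ⌊ξ − min K⌋ ∈ ℤ, ξ is an n-periodic (mod 1) point of F, and the rotation number satisfies ρ_F = m/n. -/
/-!
All iterates `Fʲ`, `j ≥ 1`, are constant on `K = [a, b]`, so `Fⁿ(K)` is a single point `ξ`, and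
the hitting hypothesis writes `ξ = y + m` with `y ∈ K`. Then `Fʲ ξ = Fʲ y + m = Fʲ a + m`, so
`Fⁿ ξ = ξ + m`, while a return of `ξ` modulo `1` at a time `j < n` would put `Fʲ a` in `K + ℤ`.
Since `F` is constant on `K` and has degree one, `K` is shorter than `1`, which pins `m` down as
`⌊ξ - a⌋`. A monotone degree-one map is a `CircleDeg1Lift`, whose translation number is the limit
in the statement and equals `m / n` at a periodic point of type `(m, n)`.
-/

open Filter Topology

theorem Function.iterate_eq_iterate_of_apply_eq {α : Type*} {F : α → α} {x y : α}
    (h : F x = F y) {j : ℕ} (hj : 0 < j) : F^[j] x = F^[j] y := by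
  obtain ⟨i, rfl⟩ := Nat.exists_eq_add_of_lt hj
  rw [Nat.zero_add, Function.iterate_succ_apply, Function.iterate_succ_apply, h]

theorem Int.floor_add_int_sub_eq {a y : ℝ} (hy : y ∈ Set.Ico a (a + 1)) (m : ℤ) :
    ⌊y + m - a⌋ = m := by
  rw [Int.floor_eq_iff]
  constructor <;> linarith [hy.1, hy.2]

namespace CircleDeg1Lift

variable (f : CircleDeg1Lift)

theorem iterate_map_add_int (j : ℕ) (x : ℝ) (m : ℤ) : f^[j] (x + m) = f^[j] x + m := by
  rw [← coe_pow, map_add_int]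

theorem lt_add_one_of_map_eq {x y : ℝ} (h : f y = f x) : y < x + 1 := by
  by_contra! hle
  linarith [f.monotone hle, f.map_add_one x]

end CircleDeg1Lift

theorem exact_rotation_number_from_constant_section_general (F : ℝ → ℝ)
    (hdeg : ∀ x : ℝ, F (x + 1) = F x + 1) (hmono : Monotone F)
    (a b : ℝ) (hab : a < b) (hconst : ∀ x ∈ Set.Icc a b, F x = F a)
    (n : ℕ) (hn : 0 < n)
    (hhit : (F^[n] '' Set.Icc a b ∩
      {y : ℝ | ∃ x ∈ Set.Icc a b, ∃ j : ℤ, y = x + j}).Nonempty)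
    (hmin : ∀ j : ℕ, 0 < j → j < n →
      F^[j] '' Set.Icc a b ∩ {y : ℝ | ∃ x ∈ Set.Icc a b, ∃ j : ℤ, y = x + j} = ∅) :
    ∃ ξ : ℝ, F^[n] '' Set.Icc a b = {ξ} ∧
      ξ ∈ Set.Icc (a + (⌊ξ - a⌋ : ℝ)) (b + (⌊ξ - a⌋ : ℝ)) ∧
      (F^[n] ξ = ξ + ⌊ξ - a⌋ ∧
        ∀ j : ℕ, 1 ≤ j → j < n → ¬∃ m : ℤ, F^[j] ξ - ξ = m) ∧
      Tendsto (fun m : ℕ => (F^[m] ξ - ξ) / m) atTop (𝓝 ((⌊ξ - a⌋ : ℝ) / n)) := by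
  obtain ⟨f, rfl⟩ : ∃ f : CircleDeg1Lift, ⇑f = F := ⟨⟨⟨F, hmono⟩, hdeg⟩, rfl⟩
  have haK : a ∈ Set.Icc a b := Set.left_mem_Icc.2 hab.le
  have hflat : ∀ j, 0 < j → ∀ x ∈ Set.Icc a b, f^[j] x = f^[j] a := fun j hj x hx =>
    Function.iterate_eq_iterate_of_apply_eq (hconst x hx) hj
  set ξ := f^[n] a
  have himage : f^[n] '' Set.Icc a b = {ξ} :=
    (Set.EqOn.image_eq fun x hx => hflat n hn x hx).trans ((Set.nonempty_of_mem haK).image_const ξ)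
  obtain ⟨_, ⟨x, hx, rfl⟩, y, hy, m, hxy⟩ := hhit
  have hξ : ξ = y + m := (hflat n hn x hx).symm.trans hxy
  have hfloor : ⌊ξ - a⌋ = m := by
    have hba : b < a + 1 := f.lt_add_one_of_map_eq (hconst b (Set.right_mem_Icc.2 hab.le))
    rw [hξ]
    exact Int.floor_add_int_sub_eq ⟨hy.1, hy.2.trans_lt hba⟩ m
  have hshift : ∀ j, 0 < j → f^[j] ξ = f^[j] a + m := fun j hj => by
    rw [hξ, f.iterate_map_add_int, hflat j hj y hy]
  refine ⟨ξ, himage, ?_, ⟨hfloor ▸ hshift n hn, ?_⟩, ?_⟩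
  · rw [hfloor, hξ]
    exact ⟨by linarith [hy.1], by linarith [hy.2]⟩
  · rintro j hj hjn ⟨k, hk⟩
    have hreturn : f^[j] a = y + k := by linarith [hshift j hj]
    exact (hmin j hj hjn).subset ⟨⟨a, haK, rfl⟩, y, hy, k, hreturn⟩
  · have hper : (f ^ n) ξ = ξ + m := by rw [CircleDeg1Lift.coe_pow]; exact hshift n hn
    rw [hfloor, ← f.translationNumber_of_map_pow_eq_add_int hper hn]
    simpa only [CircleDeg1Lift.coe_pow] using f.tendsto_translationNumber ξ

theorem exact_rotation_number_from_constant_section (F : ℝ → ℝ) (hF : Continuous F)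
    (hdeg : ∀ x : ℝ, F (x + 1) = F x + 1) (hmono : Monotone F)
    (a b : ℝ) (hab : a < b) (hconst : ∀ x ∈ Set.Icc a b, F x = F a)
    (n : ℕ) (hn : 0 < n)
    (hhit : (F^[n] '' Set.Icc a b ∩
      {y : ℝ | ∃ x ∈ Set.Icc a b, ∃ j : ℤ, y = x + j}).Nonempty)
    (hmin : ∀ j : ℕ, 0 < j → j < n →
      F^[j] '' Set.Icc a b ∩ {y : ℝ | ∃ x ∈ Set.Icc a b, ∃ j : ℤ, y = x + j} = ∅) :
    ∃ ξ : ℝ, F^[n] '' Set.Icc a b = {ξ} ∧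
      ξ ∈ Set.Icc (a + (⌊ξ - a⌋ : ℝ)) (b + (⌊ξ - a⌋ : ℝ)) ∧
      (F^[n] ξ = ξ + ⌊ξ - a⌋ ∧
        ∀ j : ℕ, 1 ≤ j → j < n → ¬∃ m : ℤ, F^[j] ξ - ξ = m) ∧
      Tendsto (fun m : ℕ => (F^[m] ξ - ξ) / m) atTop (𝓝 ((⌊ξ - a⌋ : ℝ) / n)) :=
  exact_rotation_number_from_constant_section_general F hdeg hmono a b hab hconst n hn hhit hmin
end

section
/- Let F ∈ L₁ be the map defined in the previous context (the example with constant section K = [0.8, 1] and ρ_F = 1/3). Then F³(K) = {1.75}, which is not contained in K + ℤ; moreover F has no lifted cycle intersecting K + ℤ. -/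
noncomputable def F₀ (x : ℝ) : ℝ :=
  if x ≤ 0.1 then x + 0.2
  else if x ≤ 0.3 then x / 2 + 0.25
  else if x ≤ 0.4 then 7 * x - 1.7
  else if x ≤ 0.8 then x / 4 + 1
  else 1.2

noncomputable def Fex (x : ℝ) : ℝ := F₀ (Int.fract x) + ⌊x⌋

lemma Fex_eval (x t : ℝ) (m : ℤ) (h : x = t + m) (h0 : 0 ≤ t) (h1 : t < 1) :
    Fex x = F₀ t + m := by
  subst h
  unfold Fex
  rw [Int.fract_add_intCast, Int.floor_add_intCast, Int.fract_eq_self.2 ⟨h0, h1⟩,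
    Int.floor_eq_zero_iff.2 ⟨h0, h1⟩]
  push_cast; ring

lemma Fex_add_int (x : ℝ) (j : ℤ) : Fex (x + j) = Fex x + j := by
  unfold Fex
  rw [Int.fract_add_intCast, Int.floor_add_intCast]
  push_cast; ring

lemma Fex_iter_add_int (n : ℕ) (x : ℝ) (j : ℤ) : Fex^[n] (x + j) = Fex^[n] x + j := by
  induction n generalizing x with
  | zero => simp
  | succ n ih =>
      rw [Function.iterate_succ_apply, Fex_add_int, ih, Function.iterate_succ_apply]

lemma Fex_of_Icc (z : ℝ) (hz : z ∈ Set.Icc (0.8 : ℝ) 1) : Fex z = 1.2 := by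
  obtain ⟨h1, h2⟩ := hz
  rcases eq_or_lt_of_le h2 with h | h
  · subst h
    have : Fex 1 = F₀ 0 + (1 : ℤ) := Fex_eval 1 0 1 (by norm_num) le_rfl one_pos
    rw [this]
    unfold F₀; norm_num
  · have : Fex z = F₀ z + (0 : ℤ) := Fex_eval z z 0 (by norm_num) (by linarith) h
    rw [this]
    unfold F₀
    split_ifs with h1' h2' h3' h4'
    · linarith
    · linarith
    · linarith
    · have : z = 0.8 := le_antisymm h4' h1
      rw [this]; norm_num
    · norm_num

/-- The invariant set of fractional parts for the orbit of `1.2`. -/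
def Sinv (t : ℝ) : Prop :=
  (0.1 < t ∧ t ≤ 0.2) ∨ (0.3 < t ∧ t ≤ 0.35) ∨ (0.4 < t ∧ t ≤ 0.75)

lemma Sinv_step (y : ℝ) (h : Sinv (Int.fract y)) : Sinv (Int.fract (Fex y)) := by
  set t := Int.fract y with ht
  have h0 : (0:ℝ) ≤ t := Int.fract_nonneg y
  have h1 : t < 1 := Int.fract_lt_one y
  have hy : Fex y = F₀ t + ⌊y⌋ :=
    Fex_eval y t ⌊y⌋ (by rw [ht, add_comm]; exact (Int.floor_add_fract y).symm) h0 h1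
  rw [hy, Int.fract_add_intCast]
  rcases h with ⟨ha, hb⟩ | ⟨ha, hb⟩ | ⟨ha, hb⟩
  · have : F₀ t = t / 2 + 0.25 := by
      unfold F₀; rw [if_neg (by linarith), if_pos (by linarith)]
    rw [this, Int.fract_eq_self.2 ⟨by linarith, by linarith⟩]
    exact Or.inr (Or.inl ⟨by linarith, by linarith⟩)
  · have : F₀ t = 7 * t - 1.7 := by
      unfold F₀
      rw [if_neg (by linarith), if_neg (by linarith), if_pos (by linarith)]
    rw [this, Int.fract_eq_self.2 ⟨by linarith, by linarith⟩]
    exact Or.inr (Or.inr ⟨by linarith, by linarith⟩)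
  · have hF : F₀ t = t / 4 + 1 := by
      unfold F₀
      rw [if_neg (by linarith), if_neg (by linarith), if_neg (by linarith),
        if_pos (by linarith)]
    have : Int.fract (F₀ t) = t / 4 := by
      rw [hF, show t / 4 + 1 = t / 4 + ((1:ℤ):ℝ) by norm_num, Int.fract_add_intCast,
        Int.fract_eq_self.2 ⟨by linarith, by linarith⟩]
    rw [this]
    exact Or.inl ⟨by linarith, by linarith⟩

lemma Fex_12 : Fex 1.2 = 1.35 := by
  have : Fex 1.2 = F₀ 0.2 + (1 : ℤ) := Fex_eval 1.2 0.2 1 (by norm_num) (by norm_num) (by norm_num)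
  rw [this]; unfold F₀; norm_num

lemma Fex_135 : Fex 1.35 = 1.75 := by
  have : Fex 1.35 = F₀ 0.35 + (1 : ℤ) :=
    Fex_eval 1.35 0.35 1 (by norm_num) (by norm_num) (by norm_num)
  rw [this]; unfold F₀; norm_num

lemma Fex3_eq (z : ℝ) (hz : z ∈ Set.Icc (0.8 : ℝ) 1) : Fex^[3] z = 1.75 := by
  have h3 : Fex^[3] z = Fex (Fex (Fex z)) := rfl
  rw [h3, Fex_of_Icc z hz, Fex_12, Fex_135]

lemma Sinv_orbit (z : ℝ) (hz : z ∈ Set.Icc (0.8 : ℝ) 1) (n : ℕ) :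
    Sinv (Int.fract (Fex^[n + 1] z)) := by
  induction n with
  | zero =>
      have h1 : Fex^[1] z = 1.2 := by
        rw [Function.iterate_one]; exact Fex_of_Icc z hz
      rw [h1]
      have : Int.fract (1.2 : ℝ) = 0.2 := by
        rw [show (1.2 : ℝ) = 0.2 + ((1:ℤ):ℝ) by norm_num, Int.fract_add_intCast,
          Int.fract_eq_self.2 ⟨by norm_num, by norm_num⟩]
      rw [this]
      exact Or.inl ⟨by norm_num, by norm_num⟩
  | succ n ih =>
      rw [Function.iterate_succ_apply']
      exact Sinv_step _ ih

theorem example_map_no_cycle_in_constant_section :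
    Fex^[3] '' Set.Icc (0.8 : ℝ) 1 = {(1.75 : ℝ)} ∧
    (1.75 : ℝ) ∉ {y : ℝ | ∃ x ∈ Set.Icc (0.8 : ℝ) 1, ∃ j : ℤ, y = x + j} ∧
    (∀ x ∈ {y : ℝ | ∃ z ∈ Set.Icc (0.8 : ℝ) 1, ∃ j : ℤ, y = z + j},
      ∀ n : ℕ, 0 < n → ∀ k : ℤ, Fex^[n] x ≠ x + k) := by
  refine ⟨?_, ?_, ?_⟩
  · ext y
    simp only [Set.mem_image, Set.mem_singleton_iff]
    constructor
    · rintro ⟨z, hz, rfl⟩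
      exact Fex3_eq z hz
    · rintro rfl
      exact ⟨0.8, ⟨le_rfl, by norm_num⟩, Fex3_eq 0.8 ⟨le_rfl, by norm_num⟩⟩
  · rintro ⟨x, ⟨hx1, hx2⟩, j, hj⟩
    have hj0 : (0 : ℝ) < j := by linarith [hj]
    have hj1 : (j : ℝ) < 1 := by linarith [hj]
    have h0 : (0 : ℤ) < j := by exact_mod_cast hj0
    have h1 : j < 1 := by exact_mod_cast hj1
    omega
  · rintro x ⟨z, hz, j, rfl⟩ n hn k hk
    obtain ⟨m, rfl⟩ := Nat.exists_eq_succ_of_ne_zero hn.ne'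
    rw [Fex_iter_add_int] at hk
    have hzk : Fex^[m + 1] z = z + k := by linarith [hk]
    have hS : Sinv (Int.fract (Fex^[m + 1] z)) := Sinv_orbit z hz m
    rw [hzk, Int.fract_add_intCast] at hS
    obtain ⟨hz1, hz2⟩ := hz
    rcases eq_or_lt_of_le hz2 with h | h
    · subst h
      rw [Int.fract_one] at hS
      rcases hS with ⟨h, _⟩ | ⟨h, _⟩ | ⟨h, _⟩ <;> norm_num at h
    · rw [Int.fract_eq_self.2 ⟨by linarith, h⟩] at hS
      rcases hS with ⟨_, h'⟩ | ⟨_, h'⟩ | ⟨_, h'⟩ <;> linarith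
end
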